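/- For the CIR-type Laplace transform: if γ = √(κ² + 2Σ²Λ) with κ, Σ > 0 and Λ ≥ −κ²/(2Σ²), then the functions U(t) = (−2/Σ²) log[2γ e^{(γ+κ)t/2} / ((γ−κ) + e^{γt}(γ+κ))] and V(t) = 2Λ(e^{γt} − 1)/((γ−κ) + e^{γt}(γ+κ)) satisfy the Riccati system V'(t) = Λ − κV(t) − (Σ²/2)V(t)², U'(t) = V(t), with U(0) = V(0) = 0. -/

import Mathlib

open Real

/-!
Write `E = exp (γ t)` and `D = (γ - κ) + E (γ + κ)`, so `D' = γ (γ + κ) E`. The quotient rule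
gives `V' = 4Λγ²E / D²`, and after substituting `2Σ²Λ = γ² - κ²` the Riccati right-hand side
`Λ - κV - (Σ²/2)V²` becomes the same fraction, because
`D² - 2κ(E - 1)D - (γ² - κ²)(E - 1)² = 4γ²E`. Similarly
`U' = -(2/Σ²)((γ + κ)/2 - D'/D)`, and `D - 2γE = (γ - κ)(1 - E)` turns this into
`(γ² - κ²)(E - 1)/(Σ² D) = V`.
-/

noncomputable section

def cirDenom (γ κ t : ℝ) : ℝ := (γ - κ) + exp (γ * t) * (γ + κ)

def cirV (γ κ Λ t : ℝ) : ℝ := 2 * Λ * (exp (γ * t) - 1) / cirDenom γ κ t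

def cirU (γ κ S t : ℝ) : ℝ :=
  (-2 / S ^ 2) * log (2 * γ * exp ((γ + κ) * t / 2) / cirDenom γ κ t)

end

lemma cirDenom_zero (γ κ : ℝ) : cirDenom γ κ 0 = 2 * γ := by
  rw [cirDenom, mul_zero, Real.exp_zero, one_mul]
  ring

lemma hasDerivAt_exp_const_mul (a t : ℝ) :
    HasDerivAt (fun t => exp (a * t)) (a * exp (a * t)) t := by
  simpa [mul_comm] using ((hasDerivAt_id t).const_mul a).exp

lemma hasDerivAt_cirDenom (γ κ t : ℝ) :
    HasDerivAt (cirDenom γ κ) (γ * (γ + κ) * exp (γ * t)) t :=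
  (((hasDerivAt_exp_const_mul γ t).mul_const (γ + κ)).const_add (γ - κ)).congr_deriv (by ring)

lemma cirV_zero (γ κ Λ : ℝ) : cirV γ κ Λ 0 = 0 := by
  simp [cirV]

section

variable {γ κ : ℝ}

lemma cirDenom_pos (hγ : 0 < γ) (hκ : 0 ≤ κ) {t : ℝ} (ht : 0 ≤ t) : 0 < cirDenom γ κ t := by
  have hE : 1 ≤ exp (γ * t) := one_le_exp (by positivity)
  unfold cirDenom
  nlinarith

lemma cirU_zero (hγ : γ ≠ 0) (S : ℝ) : cirU γ κ S 0 = 0 := by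
  simp [cirU, cirDenom_zero, hγ]

variable {S Λ : ℝ}

lemma cir_riccati_identity {E D : ℝ} (hγ2 : γ ^ 2 = κ ^ 2 + 2 * S ^ 2 * Λ)
    (hDE : D = γ - κ + E * (γ + κ)) (hD : D ≠ 0) :
    (2 * Λ * (γ * E) * D - 2 * Λ * (E - 1) * (γ * (γ + κ) * E)) / D ^ 2
      = Λ - κ * (2 * Λ * (E - 1) / D) - S ^ 2 / 2 * (2 * Λ * (E - 1) / D) ^ 2 := by
  field_simp
  subst hDE
  linear_combination (-(Λ * (E - 1) ^ 2)) * hγ2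

lemma cir_logDeriv_identity {E D F : ℝ} (hγ : γ ≠ 0) (hS : S ≠ 0) (hF : F ≠ 0)
    (hγ2 : γ ^ 2 = κ ^ 2 + 2 * S ^ 2 * Λ) (hDE : D = γ - κ + E * (γ + κ)) (hD : D ≠ 0) :
    -2 / S ^ 2 * ((2 * γ * ((γ + κ) / 2 * F) * D - 2 * γ * F * (γ * (γ + κ) * E)) / D ^ 2
      / (2 * γ * F / D)) = 2 * Λ * (E - 1) / D := by
  field_simp
  subst hDE
  linear_combination (E - 1) * hγ2

lemma hasDerivAt_cirV (hγ2 : γ ^ 2 = κ ^ 2 + 2 * S ^ 2 * Λ) {t : ℝ} (hD : cirDenom γ κ t ≠ 0) :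
    HasDerivAt (cirV γ κ Λ) (Λ - κ * cirV γ κ Λ t - S ^ 2 / 2 * cirV γ κ Λ t ^ 2) t :=
  ((((hasDerivAt_exp_const_mul γ t).sub_const 1).const_mul (2 * Λ)).div
    (hasDerivAt_cirDenom γ κ t) hD).congr_deriv (cir_riccati_identity hγ2 rfl hD)

lemma hasDerivAt_cirU (hγ : γ ≠ 0) (hS : S ≠ 0) (hγ2 : γ ^ 2 = κ ^ 2 + 2 * S ^ 2 * Λ) {t : ℝ}
    (hD : cirDenom γ κ t ≠ 0) : HasDerivAt (cirU γ κ S) (cirV γ κ Λ t) t := by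
  have hexp : HasDerivAt (fun t => exp ((γ + κ) * t / 2))
      ((γ + κ) / 2 * exp ((γ + κ) * t / 2)) t := by
    simpa only [mul_div_right_comm] using hasDerivAt_exp_const_mul ((γ + κ) / 2) t
  have hF := (exp_pos ((γ + κ) * t / 2)).ne'
  have hf := (hexp.const_mul (2 * γ)).div (hasDerivAt_cirDenom γ κ t) hD
  have hf0 : 2 * γ * exp ((γ + κ) * t / 2) / cirDenom γ κ t ≠ 0 := by positivity
  exact ((hf.log hf0).const_mul (-2 / S ^ 2)).congr_deriv
    (cir_logDeriv_identity hγ hS hF hγ2 rfl hD)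

end

lemma sq_add_two_mul_sq_mul_pos {κ S Λ : ℝ} (hS : S ≠ 0)
    (hΛ : Λ > -κ ^ 2 / (2 * S ^ 2)) : 0 < κ ^ 2 + 2 * S ^ 2 * Λ := by
  rw [gt_iff_lt, div_lt_iff₀ (by positivity)] at hΛ
  nlinarith

/-- CIR-type Laplace transform: with `γ = √(κ² + 2Σ²Λ)` (`κ, Σ > 0`, `Λ > −κ²/(2Σ²)`), the
closed-form functions `U, V` satisfy the Riccati system
`V' = Λ − κV − (Σ²/2)V²`, `U' = V`, with `U(0) = V(0) = 0`.  (`S` denotes `Σ`.) -/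
theorem stmt14 (κ S Λ : ℝ) (hκ : 0 < κ) (hS : 0 < S) (hΛ : Λ > -κ ^ 2 / (2 * S ^ 2))
    (γ : ℝ) (hγ : γ = Real.sqrt (κ ^ 2 + 2 * S ^ 2 * Λ))
    (U V : ℝ → ℝ)
    (hU : U = fun t => (-2 / S ^ 2) * Real.log
      (2 * γ * Real.exp ((γ + κ) * t / 2) / ((γ - κ) + Real.exp (γ * t) * (γ + κ))))
    (hV : V = fun t => 2 * Λ * (Real.exp (γ * t) - 1) /
      ((γ - κ) + Real.exp (γ * t) * (γ + κ))) :
    U 0 = 0 ∧ V 0 = 0 ∧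
      ∀ t : ℝ, 0 ≤ t →
        HasDerivAt V (Λ - κ * V t - S ^ 2 / 2 * (V t) ^ 2) t ∧ HasDerivAt U (V t) t := by
  have hdisc := sq_add_two_mul_sq_mul_pos hS.ne' hΛ
  have hγpos : 0 < γ := hγ ▸ sqrt_pos.mpr hdisc
  have hγ2 : γ ^ 2 = κ ^ 2 + 2 * S ^ 2 * Λ := hγ ▸ sq_sqrt hdisc.le
  subst hU hV
  refine ⟨cirU_zero hγpos.ne' S, cirV_zero γ κ Λ, fun t ht => ?_⟩
  have hD := (cirDenom_pos hγpos hκ.le ht).ne'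
  exact ⟨hasDerivAt_cirV hγ2 hD, hasDerivAt_cirU hγpos.ne' hS.ne' hγ2 hD⟩
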